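/- Common bibasic generalization of Entries 1.4.3 and 1.4.4: Let q, h, t be complex numbers with |q^h| < 1, |q^t| < 1 and |q^{ht}| < 1 (principal complex powers), and let a, b be complex numbers with |a q^t| < 1 such that all denominators below are nonzero. Then ∑_{j=0}^∞ (a q^t)^j / [(q^t;q^t)_j · (bq;q^h)_{tj}] = [1 / ((aq^t;q^t)_∞ (bq;q^h)_∞)] · ∑_{k=0}^∞ [(aq^t;q^t)_{hk} / (q^h;q^h)_k] · (−bq)^k · (q^h)^{k(k−1)/2}. -/

import Mathlib

open Complex

/-- Finite q-Pochhammer symbol `(A;Q)_k = ∏_{r=0}^{k-1} (1 - A Q^r)`. -/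
noncomputable def qp (A Q : ℂ) (k : ℕ) : ℂ := ∏ r ∈ Finset.range k, (1 - A * Q ^ r)

/-- Infinite q-Pochhammer symbol `(A;Q)_∞ = ∏_{r=0}^{∞} (1 - A Q^r)`. -/
noncomputable def qpInf (A Q : ℂ) : ℂ := ∏' r : ℕ, (1 - A * Q ^ r)

/-- q-Pochhammer symbol with (possibly non-integer) index:
`(A;Q)_{c k} := (A;Q)_∞ / (A R^k;Q)_∞` where `R = Q^c`. -/
noncomputable def qpc (A Q R : ℂ) (k : ℕ) : ℂ := qpInf A Q / qpInf (A * R ^ k) Q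

/-- q-Pochhammer symbol with shifted (possibly non-integer) index:
`(A;Q)_{c k + 1} := (A;Q)_∞ / (A Q R^k;Q)_∞` where `R = Q^c`. -/
noncomputable def qpc1 (A Q R : ℂ) (k : ℕ) : ℂ := qpInf A Q / qpInf (A * Q * R ^ k) Q

/-!
Write `Q₁ = q^t`, `Q₂ = q^h`, `R = q^{ht}`, `A = a q^t`, `B = b q` and
`e_k = (-1)^k Q₂^{k(k-1)/2} / (Q₂;Q₂)_k`. Both sides are iterated sums of the absolutely
convergent double series `∑_{j,k} A^j / (Q₁;Q₁)_j · e_k B^k · R^{jk}`. Summing over `k` first,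
Euler's identity `∑ e_k x^k = (x;Q₂)_∞` at `x = B R^j` gives the left side; summing over `j`
first, Euler's identity `∑ x^j / (Q₁;Q₁)_j = 1 / (x;Q₁)_∞` at `x = A R^k` gives the right side.

Each Euler identity comes from a `q`-difference equation, `F(Q x) = (1 - x) F(x)` for the first and
`G(x) = (1 - x) G(Q x)` for the second, iterated `N` times; as `Q^N x → 0` the series tends to
its constant term `1` while `(x;Q)_N → (x;Q)_∞`.
-/
open Filter Topology

@[simp]
lemma qp_zero (A Q : ℂ) : qp A Q 0 = 1 := Finset.prod_range_zero _

lemma qp_succ (A Q : ℂ) (n : ℕ) : qp A Q (n + 1) = qp A Q n * (1 - A * Q ^ n) :=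
  Finset.prod_range_succ _ _

lemma one_sub_pow_ne_zero {Q : ℂ} (hQ : ‖Q‖ < 1) {n : ℕ} (hn : n ≠ 0) : 1 - Q ^ n ≠ 0 := by
  refine sub_ne_zero.2 fun h => (pow_lt_one₀ (norm_nonneg Q) hQ hn).ne ?_
  rw [← norm_pow, ← h, norm_one]

lemma tendsto_qp_qpInf (A : ℂ) {Q : ℂ} (hQ : ‖Q‖ < 1) :
    Tendsto (qp A Q) atTop (𝓝 (qpInf A Q)) := by
  have : Multipliable fun r : ℕ => 1 - A * Q ^ r := by
    simpa [sub_eq_add_neg] using Complex.multipliable_one_add_of_summable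
      ((summable_geometric_of_norm_lt_one hQ).mul_left A).neg
  exact this.hasProd.tendsto_prod_nat

lemma tendsto_inv_one_sub_pow_succ {Q : ℂ} (hQ : ‖Q‖ < 1) :
    Tendsto (fun n : ℕ => (1 - Q ^ (n + 1))⁻¹) atTop (𝓝 1) := by
  have := (((tendsto_pow_atTop_nhds_zero_of_norm_lt_one hQ).comp
    (tendsto_add_atTop_nat 1)).const_sub 1).inv₀ (by simp)
  simpa using this

section PowerSeries

variable {c : ℕ → ℂ} {x : ℂ}

lemma summable_norm_mul_pow_of_ratio {ρ : ℕ → ℂ} {l : ℝ} (hc : ∀ n, c (n + 1) = ρ n * c n)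
    (hρ : Tendsto (fun n => ‖ρ n‖) atTop (𝓝 l)) (hx : l * ‖x‖ < 1) :
    Summable fun n => ‖c n * x ^ n‖ := by
  obtain ⟨r, hlr, hr1⟩ := exists_between hx
  refine summable_of_ratio_norm_eventually_le hr1 ?_
  filter_upwards [(hρ.mul_const ‖x‖).eventually_le_const hlr] with n hn
  have : ‖c (n + 1) * x ^ (n + 1)‖ = ‖ρ n‖ * ‖x‖ * ‖c n * x ^ n‖ := by
    rw [hc, pow_succ]; simp only [norm_mul, norm_pow]; ring
  rw [norm_norm, norm_norm, this]
  exact mul_le_mul_of_nonneg_right hn (norm_nonneg _)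

lemma tendsto_tsum_mul_pow_mul_pow (hc : Summable fun n => ‖c n * x ^ n‖) {Q : ℂ}
    (hQ : ‖Q‖ < 1) : Tendsto (fun N : ℕ => ∑' n, c n * (Q ^ N * x) ^ n) atTop (𝓝 (c 0)) := by
  have hlim (n : ℕ) : Tendsto (fun N : ℕ => c n * (Q ^ N * x) ^ n) atTop
      (𝓝 (c n * (0 * x) ^ n)) :=
    (((tendsto_pow_atTop_nhds_zero_of_norm_lt_one hQ).mul_const x).pow n).const_mul (c n)
  have hbound (N n : ℕ) : ‖c n * (Q ^ N * x) ^ n‖ ≤ ‖c n * x ^ n‖ := by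
    simp only [norm_mul, norm_pow]
    gcongr
    exact mul_le_of_le_one_left (norm_nonneg x) (pow_le_one₀ (norm_nonneg Q) hQ.le)
  convert tendsto_tsum_of_dominated_convergence hc hlim (.of_forall hbound)
  rw [tsum_eq_single 0 fun n hn => by simp [zero_pow hn]]
  simp

lemma tsum_mul_pow_sub_tsum_mul_pow {Q μ ν : ℂ} (hQ : ‖Q‖ < 1)
    (hc : ∀ n, c (n + 1) = μ * ν ^ n * (1 - Q ^ (n + 1))⁻¹ * c n)
    (hx : Summable fun n => c n * x ^ n) (hQx : Summable fun n => c n * (Q * x) ^ n) :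
    ∑' n, c n * x ^ n - ∑' n, c n * (Q * x) ^ n = μ * x * ∑' n, c n * (ν * x) ^ n := by
  rw [← hx.tsum_sub hQx, ← tsum_mul_left, (hx.sub hQx).tsum_eq_zero_add]
  simp only [pow_zero, mul_one, sub_self, zero_add]
  refine tsum_congr fun n => ?_
  have := mul_inv_cancel₀ (one_sub_pow_ne_zero hQ (n := n + 1) (by omega))
  rw [hc]
  linear_combination μ * ν ^ n * c n * x ^ (n + 1) * this

end PowerSeries

section Euler

variable {Q : ℂ}

lemma inv_qp_succ (Q : ℂ) (n : ℕ) :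
    (qp Q Q (n + 1))⁻¹ = (1 - Q ^ (n + 1))⁻¹ * (qp Q Q n)⁻¹ := by
  rw [qp_succ, mul_inv, pow_succ', mul_comm]

lemma summable_norm_inv_qp_mul_pow (hQ : ‖Q‖ < 1) {x : ℂ} (hx : ‖x‖ < 1) :
    Summable fun n => ‖(qp Q Q n)⁻¹ * x ^ n‖ := by
  refine summable_norm_mul_pow_of_ratio (inv_qp_succ Q) ?_ (l := 1) (by simpa using hx)
  simpa using (tendsto_inv_one_sub_pow_succ hQ).norm

theorem qpInf_mul_tsum_inv_qp_mul_pow (hQ : ‖Q‖ < 1) {x : ℂ} (hx : ‖x‖ < 1) :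
    qpInf x Q * ∑' n, (qp Q Q n)⁻¹ * x ^ n = 1 := by
  set F : ℂ → ℂ := fun y => ∑' n, (qp Q Q n)⁻¹ * y ^ n
  have hQy {y : ℂ} (hy : ‖y‖ < 1) : ‖Q * y‖ < 1 := by
    rw [norm_mul]; exact mul_lt_one_of_nonneg_of_lt_one_left (norm_nonneg Q) hQ hy.le
  have hF {y : ℂ} (hy : ‖y‖ < 1) : F (Q * y) = (1 - y) * F y := by
    have := tsum_mul_pow_sub_tsum_mul_pow hQ (μ := 1) (ν := 1)
      (fun n => by rw [inv_qp_succ, one_pow, one_mul, one_mul])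
      (summable_norm_inv_qp_mul_pow hQ hy).of_norm
      (summable_norm_inv_qp_mul_pow hQ (hQy hy)).of_norm
    simp only [one_mul] at this
    linear_combination -this
  have hiter (N : ℕ) : ‖Q ^ N * x‖ < 1 ∧ F (Q ^ N * x) = qp x Q N * F x := by
    induction N with
    | zero => simp [hx]
    | succ N ih =>
      refine ⟨by simpa [pow_succ', mul_assoc] using hQy ih.1, ?_⟩
      rw [pow_succ', mul_assoc, hF ih.1, ih.2, qp_succ]; ring
  have hlim := tendsto_tsum_mul_pow_mul_pow (summable_norm_inv_qp_mul_pow hQ hx) hQ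
  rw [qp_zero, inv_one] at hlim
  exact tendsto_nhds_unique ((tendsto_qp_qpInf x hQ).mul_const (F x))
    (hlim.congr fun N => (hiter N).2)

theorem qpInf_ne_zero (hQ : ‖Q‖ < 1) {x : ℂ} (hx : ‖x‖ < 1) : qpInf x Q ≠ 0 :=
  left_ne_zero_of_mul_eq_one (qpInf_mul_tsum_inv_qp_mul_pow hQ hx)

noncomputable def eulerCoeff (Q : ℂ) (n : ℕ) : ℂ := (-1) ^ n * Q ^ (n * (n - 1) / 2) / qp Q Q n

lemma eulerCoeff_zero (Q : ℂ) : eulerCoeff Q 0 = 1 := by simp [eulerCoeff, qp_zero]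

lemma eulerCoeff_succ (Q : ℂ) (n : ℕ) :
    eulerCoeff Q (n + 1) = -1 * Q ^ n * (1 - Q ^ (n + 1))⁻¹ * eulerCoeff Q n := by
  simp only [eulerCoeff, div_eq_mul_inv, qp_succ, mul_inv, Nat.triangle_succ, pow_succ', pow_add]
  ring

lemma summable_norm_eulerCoeff_mul_pow (hQ : ‖Q‖ < 1) (x : ℂ) :
    Summable fun n => ‖eulerCoeff Q n * x ^ n‖ := by
  refine summable_norm_mul_pow_of_ratio (eulerCoeff_succ Q) ?_ (l := 0) (by simp)
  simpa using (((tendsto_pow_atTop_nhds_zero_of_norm_lt_one hQ).const_mul (-1)).mul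
    (tendsto_inv_one_sub_pow_succ hQ)).norm

theorem tsum_eulerCoeff_mul_pow (hQ : ‖Q‖ < 1) (x : ℂ) :
    ∑' n, eulerCoeff Q n * x ^ n = qpInf x Q := by
  set G : ℂ → ℂ := fun y => ∑' n, eulerCoeff Q n * y ^ n
  have hG (y : ℂ) : G y = (1 - y) * G (Q * y) := by
    have := tsum_mul_pow_sub_tsum_mul_pow hQ (eulerCoeff_succ Q)
      (summable_norm_eulerCoeff_mul_pow hQ y).of_norm
      (summable_norm_eulerCoeff_mul_pow hQ (Q * y)).of_norm
    linear_combination this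
  have hiter (N : ℕ) : G x = qp x Q N * G (Q ^ N * x) := by
    induction N with
    | zero => simp
    | succ N ih => rw [ih, hG, qp_succ, pow_succ', mul_assoc Q]; ring
  have hlim := tendsto_tsum_mul_pow_mul_pow (summable_norm_eulerCoeff_mul_pow hQ x) hQ
  rw [eulerCoeff_zero] at hlim
  exact tendsto_nhds_unique (tendsto_const_nhds.congr hiter)
    (by simpa using (tendsto_qp_qpInf x hQ).mul hlim)

end Euler

section Bibasic

variable {Q₁ Q₂ R A : ℂ}

lemma summable_inv_qp_mul_pow_mul_eulerCoeff_mul_pow (hQ₁ : ‖Q₁‖ < 1) (hQ₂ : ‖Q₂‖ < 1)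
    (hR : ‖R‖ < 1) (hA : ‖A‖ < 1) (B : ℂ) :
    Summable fun p : ℕ × ℕ =>
      (qp Q₁ Q₁ p.1)⁻¹ * A ^ p.1 * (eulerCoeff Q₂ p.2 * B ^ p.2) * R ^ (p.1 * p.2) := by
  refine .of_norm_bounded ((summable_norm_inv_qp_mul_pow hQ₁ hA).mul_of_nonneg
    (summable_norm_eulerCoeff_mul_pow hQ₂ B) (fun _ => norm_nonneg _) fun _ => norm_nonneg _)
    fun p => ?_
  rw [norm_mul, norm_mul]
  exact mul_le_of_le_one_right (by positivity) (by simpa using pow_le_one₀ (norm_nonneg R) hR.le)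

theorem tsum_inv_qp_mul_pow_mul_qpInf (hQ₁ : ‖Q₁‖ < 1) (hQ₂ : ‖Q₂‖ < 1) (hR : ‖R‖ < 1)
    (hA : ‖A‖ < 1) (B : ℂ) :
    ∑' j, (qp Q₁ Q₁ j)⁻¹ * A ^ j * qpInf (B * R ^ j) Q₂ =
      ∑' k, eulerCoeff Q₂ k * B ^ k * (qpInf (A * R ^ k) Q₁)⁻¹ := by
  set F : ℕ → ℕ → ℂ := fun j k =>
    (qp Q₁ Q₁ j)⁻¹ * A ^ j * (eulerCoeff Q₂ k * B ^ k) * R ^ (j * k)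
  have hrow (j : ℕ) : ∑' k, F j k = (qp Q₁ Q₁ j)⁻¹ * A ^ j * qpInf (B * R ^ j) Q₂ := by
    rw [← tsum_eulerCoeff_mul_pow hQ₂, ← tsum_mul_left]
    refine tsum_congr fun k => ?_
    rw [mul_pow, ← pow_mul, mul_comm j k]; ring
  have hcol (k : ℕ) : ∑' j, F j k = eulerCoeff Q₂ k * B ^ k * (qpInf (A * R ^ k) Q₁)⁻¹ := by
    have hARk : ‖A * R ^ k‖ < 1 := by
      rw [norm_mul, norm_pow]
      exact mul_lt_one_of_nonneg_of_lt_one_left (norm_nonneg A) hA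
        (pow_le_one₀ (norm_nonneg R) hR.le)
    rw [← eq_inv_of_mul_eq_one_right (qpInf_mul_tsum_inv_qp_mul_pow hQ₁ hARk), ← tsum_mul_left]
    refine tsum_congr fun j => ?_
    rw [mul_pow, ← pow_mul]; ring
  rw [← tsum_congr hrow, ← tsum_congr hcol]
  exact (summable_inv_qp_mul_pow_mul_eulerCoeff_mul_pow hQ₁ hQ₂ hR hA B).tsum_comm.symm

theorem tsum_pow_div_qp_mul_qpc (hQ₁ : ‖Q₁‖ < 1) (hQ₂ : ‖Q₂‖ < 1) (hR : ‖R‖ < 1)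
    (hA : ‖A‖ < 1) (B : ℂ) :
    ∑' j, A ^ j / (qp Q₁ Q₁ j * qpc B Q₂ R j) =
      1 / (qpInf A Q₁ * qpInf B Q₂) *
        ∑' k, qpc A Q₁ R k / qp Q₂ Q₂ k * (-B) ^ k * Q₂ ^ (k * (k - 1) / 2) := by
  have hlhs : ∑' j, A ^ j / (qp Q₁ Q₁ j * qpc B Q₂ R j) =
      (qpInf B Q₂)⁻¹ * ∑' j, (qp Q₁ Q₁ j)⁻¹ * A ^ j * qpInf (B * R ^ j) Q₂ := by
    rw [← tsum_mul_left]
    refine tsum_congr fun j => ?_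
    simp only [qpc, div_eq_mul_inv, mul_inv, inv_inv]; ring
  have hrhs : ∑' k, qpc A Q₁ R k / qp Q₂ Q₂ k * (-B) ^ k * Q₂ ^ (k * (k - 1) / 2) =
      qpInf A Q₁ * ∑' k, eulerCoeff Q₂ k * B ^ k * (qpInf (A * R ^ k) Q₁)⁻¹ := by
    rw [← tsum_mul_left]
    refine tsum_congr fun k => ?_
    rw [neg_pow]
    simp only [qpc, eulerCoeff, div_eq_mul_inv]; ring
  have hA₀ := qpInf_ne_zero hQ₁ hA
  rw [hlhs, hrhs, tsum_inv_qp_mul_pow_mul_qpInf hQ₁ hQ₂ hR hA B]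
  field_simp

end Bibasic

theorem entry_1_4_3_and_4_bibasic_general (q h t a b : ℂ)
    (hqh : ‖q ^ h‖ < 1) (hqt : ‖q ^ t‖ < 1)
    (hqht : ‖q ^ (h * t)‖ < 1)
    (haq : ‖a * q ^ t‖ < 1) :
    ∑' j : ℕ, (a * q ^ t) ^ j /
        (qp (q ^ t) (q ^ t) j * qpc (b * q) (q ^ h) (q ^ (h * t)) j)
    = (1 / (qpInf (a * q ^ t) (q ^ t) * qpInf (b * q) (q ^ h))) *
      ∑' k : ℕ, (qpc (a * q ^ t) (q ^ t) (q ^ (h * t)) k / qp (q ^ h) (q ^ h) k) *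
        (-b * q) ^ k * (q ^ h) ^ (k * (k - 1) / 2) := by
  simpa only [neg_mul] using tsum_pow_div_qp_mul_qpc hqt hqh hqht haq (b * q)

/-- common bibasic generalization of Entries 1.4.3 and 1.4.4. -/
theorem entry_1_4_3_and_4_bibasic (q h t a b : ℂ)
    (hqh : ‖q ^ h‖ < 1) (hqt : ‖q ^ t‖ < 1)
    (hqht : ‖q ^ (h * t)‖ < 1)
    (haq : ‖a * q ^ t‖ < 1)
    (h1 : ∀ j : ℕ, qp (q ^ t) (q ^ t) j ≠ 0)
    (h2 : ∀ j : ℕ, qpc (b * q) (q ^ h) (q ^ (h * t)) j ≠ 0)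
    (h3 : ∀ j : ℕ, qpInf (b * q * (q ^ (h * t)) ^ j) (q ^ h) ≠ 0)
    (h4 : qpInf (a * q ^ t) (q ^ t) ≠ 0)
    (h5 : qpInf (b * q) (q ^ h) ≠ 0)
    (h6 : ∀ k : ℕ, qp (q ^ h) (q ^ h) k ≠ 0)
    (h7 : ∀ k : ℕ, qpInf (a * q ^ t * (q ^ (h * t)) ^ k) (q ^ t) ≠ 0) :
    ∑' j : ℕ, (a * q ^ t) ^ j /
        (qp (q ^ t) (q ^ t) j * qpc (b * q) (q ^ h) (q ^ (h * t)) j)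
    = (1 / (qpInf (a * q ^ t) (q ^ t) * qpInf (b * q) (q ^ h))) *
      ∑' k : ℕ, (qpc (a * q ^ t) (q ^ t) (q ^ (h * t)) k / qp (q ^ h) (q ^ h) k) *
        (-b * q) ^ k * (q ^ h) ^ (k * (k - 1) / 2) :=
  entry_1_4_3_and_4_bibasic_general q h t a b hqh hqt hqht haq
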